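/- Let x ↦ A(x) be a continuously differentiable family of self-adjoint operators on a finite-dimensional complex inner product space V such that A'(x) is positive definite for every x. Then the unitary family U(x) = e^{iA(x)} is monotone, i.e. D(x) := (1/i) U'(x) U(x)^{-1} is positive definite for every x. -/

import Mathlib

/-!
Write `K = i A(x)`, which is skew-adjoint. Duhamel's formula gives
`U'(x) = ∫₀¹ e^{sK} (i A'(x)) e^{(1-s)K} ds`, hence `D(x) = ∫₀¹ e^{sK} A'(x) (e^{sK})* ds`:
an average of congruences of the positive definite `A'(x)` by invertible operators, so
`Re ⟨D(x) φ, φ⟩ = ∫₀¹ Re ⟨A'(x) ψ_s, ψ_s⟩ ds > 0` with `ψ_s = (e^{sK})* φ ≠ 0`.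
-/

open scoped InnerProductSpace
open NormedSpace

theorem hasDerivAt_of_sub_eq_smul {𝕜 E : Type*} [NontriviallyNormedField 𝕜]
    [NormedAddCommGroup E] [NormedSpace 𝕜 E] {f g : 𝕜 → E} {a : 𝕜}
    (hfg : ∀ y, f y - f a = (y - a) • g y) (hg : ContinuousAt g a) :
    HasDerivAt f (g a) a := by
  rw [hasDerivAt_iff_tendsto_slope]
  refine (hg.tendsto.mono_left nhdsWithin_le_nhds).congr' ?_
  filter_upwards [self_mem_nhdsWithin] with y hy
  rw [slope_def_module, hfg, smul_smul, inv_mul_cancel₀ (sub_ne_zero.2 hy), one_smul]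

theorem continuous_dslope {𝕜 E : Type*} [NontriviallyNormedField 𝕜]
    [NormedAddCommGroup E] [NormedSpace 𝕜 E] {f : 𝕜 → E} {a : 𝕜}
    (hc : Continuous f) (hd : DifferentiableAt 𝕜 f a) : Continuous (dslope f a) := by
  rw [← continuousOn_univ, continuousOn_dslope Filter.univ_mem]
  exact ⟨hc.continuousOn, hd⟩

section RealBanachAlgebra

variable {𝔸 : Type*} [NormedRing 𝔸] [NormedAlgebra ℝ 𝔸]

theorem star_exp_smul_of_mem_skewAdjoint [StarRing 𝔸] [StarModule ℝ 𝔸] [ContinuousStar 𝔸]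
    {X : 𝔸} (hX : X ∈ skewAdjoint 𝔸) (t : ℝ) : star (exp (t • X)) = exp ((-t) • X) := by
  rw [star_exp, star_smul, star_trivial, skewAdjoint.mem_iff.1 hX, smul_neg, neg_smul]

variable [CompleteSpace 𝔸]

-- Mathlib proves these for `ℚ`-algebras; restricting scalars makes `𝔸` one.
theorem exp_continuous_real : Continuous (exp : 𝔸 → 𝔸) := by
  let _ : NormedAlgebra ℚ 𝔸 := NormedAlgebra.restrictScalars ℚ ℝ 𝔸
  exact exp_continuous

theorem isUnit_exp_real (X : 𝔸) : IsUnit (exp X) := by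
  let _ : NormedAlgebra ℚ 𝔸 := NormedAlgebra.restrictScalars ℚ ℝ 𝔸
  exact isUnit_exp X

theorem exp_smul_mul_exp_smul (X : 𝔸) (s t : ℝ) :
    exp (s • X) * exp (t • X) = exp ((s + t) • X) := by
  let _ : NormedAlgebra ℚ 𝔸 := NormedAlgebra.restrictScalars ℚ ℝ 𝔸
  rw [add_smul, exp_add_of_commute (((Commute.refl X).smul_left s).smul_right t)]

theorem continuous_exp_smul (X : 𝔸) : Continuous fun s : ℝ => exp (s • X) :=
  exp_continuous_real.comp (continuous_id.smul continuous_const)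

theorem continuous_exp_smul_mul_mul_exp_one_sub_smul (X Y Z : 𝔸) :
    Continuous fun s : ℝ => exp (s • X) * Y * exp ((1 - s) • Z) :=
  ((continuous_exp_smul X).mul continuous_const).mul
    ((continuous_exp_smul Z).comp (continuous_const.sub continuous_id))

-- Duhamel's formula: integrate the derivative of `s ↦ exp (s • X) * exp ((1 - s) • Y)`.
theorem exp_sub_exp_eq_integral (X Y : 𝔸) :
    exp X - exp Y = ∫ s in (0 : ℝ)..1, exp (s • X) * (X - Y) * exp ((1 - s) • Y) := by
  have hderiv : ∀ s : ℝ, HasDerivAt (fun u : ℝ => exp (u • X) * exp ((1 - u) • Y))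
      (exp (s • X) * (X - Y) * exp ((1 - s) • Y)) s := by
    intro s
    have hY : HasDerivAt (fun u : ℝ => exp ((1 - u) • Y)) ((-1 : ℝ) • (Y * exp ((1 - s) • Y))) s :=
      (hasDerivAt_exp_smul_const' Y (1 - s)).scomp s ((hasDerivAt_id s).const_sub 1)
    refine ((hasDerivAt_exp_smul_const X s).mul hY).congr_deriv ?_
    rw [neg_one_smul]
    noncomm_ring
  rw [intervalIntegral.integral_eq_sub_of_hasDerivAt (fun s _ => hderiv s)
    ((continuous_exp_smul_mul_mul_exp_one_sub_smul X (X - Y) Y).intervalIntegrable 0 1)]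
  simp

theorem hasDerivAt_exp_comp {B : ℝ → 𝔸} {B' : 𝔸} {x : ℝ} (hB : HasDerivAt B B' x)
    (hBc : Continuous B) :
    HasDerivAt (fun y => exp (B y))
      (∫ s in (0 : ℝ)..1, exp (s • B x) * B' * exp ((1 - s) • B x)) x := by
  set Φ : ℝ → 𝔸 := fun y => ∫ s in (0 : ℝ)..1, exp (s • B y) * dslope B x y * exp ((1 - s) • B x)
  have hΦ : Continuous Φ := by
    apply intervalIntegral.continuous_parametric_intervalIntegral_of_continuous'
    exact ((exp_continuous_real.comp (continuous_snd.smul (hBc.comp continuous_fst))).mul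
      ((continuous_dslope hBc hB.differentiableAt).comp continuous_fst)).mul
      ((continuous_exp_smul (B x)).comp (continuous_const.sub continuous_snd))
  have hΦx : Φ x = ∫ s in (0 : ℝ)..1, exp (s • B x) * B' * exp ((1 - s) • B x) := by
    simp only [Φ, dslope_same, hB.deriv]
  rw [← hΦx]
  -- By Duhamel's formula, `Φ` continuously extends the slope of `exp ∘ B` at `x`.
  refine hasDerivAt_of_sub_eq_smul (fun y => ?_) hΦ.continuousAt
  rw [exp_sub_exp_eq_integral, ← intervalIntegral.integral_smul]
  congr 1 with s
  rw [← smul_mul_assoc, ← mul_smul_comm, sub_smul_dslope]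

theorem integral_exp_smul_mul_mul_exp_one_sub_smul_mul_exp_neg (X Y : 𝔸) :
    (∫ s in (0 : ℝ)..1, exp (s • X) * Y * exp ((1 - s) • X)) * exp (-X) =
      ∫ s in (0 : ℝ)..1, exp (s • X) * Y * exp ((-s) • X) := by
  have hmul : ∀ Z : 𝔸, Z * exp (-X) = (ContinuousLinearMap.mul ℝ 𝔸).flip (exp (-X)) Z :=
    fun _ => rfl
  rw [hmul, ← ContinuousLinearMap.intervalIntegral_comp_comm _
    ((continuous_exp_smul_mul_mul_exp_one_sub_smul X Y X).intervalIntegrable 0 1)]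
  congr 1 with s
  rw [← hmul, mul_assoc, ← neg_one_smul ℝ X,
    exp_smul_mul_exp_smul, show 1 - s + -1 = -s by ring]

end RealBanachAlgebra

theorem re_inner_integral_mul_mul_star_pos {V : Type*} [NormedAddCommGroup V]
    [InnerProductSpace ℂ V] [CompleteSpace V] {W : ℝ → V →L[ℂ] V} (hW : Continuous W)
    (hunit : ∀ s, IsUnit (W s)) {T : V →L[ℂ] V} (hT : ∀ φ : V, φ ≠ 0 → 0 < (⟪T φ, φ⟫_ℂ).re)
    {a b : ℝ} (hab : a < b) {φ : V} (hφ : φ ≠ 0) :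
    0 < (⟪(∫ s in a..b, W s * T * star (W s)) φ, φ⟫_ℂ).re := by
  set ψ : ℝ → V := fun s => star (W s) φ
  have hψ : Continuous ψ := (continuous_star.comp hW).clm_apply continuous_const
  have hψ_ne : ∀ s, ψ s ≠ 0 := by
    intro s hs
    obtain ⟨u, hu⟩ := (hunit s).star
    have hinv : (↑u⁻¹ * ↑u : V →L[ℂ] V) φ = φ := by simp
    rw [mul_apply_eq_comp, hu, show star (W s) φ = 0 from hs, map_zero] at hinv
    exact hφ hinv.symm
  let ℓ : (V →L[ℂ] V) →L[ℝ] ℝ :=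
    Complex.reCLM.comp (((innerSL ℂ φ).comp (ContinuousLinearMap.apply ℂ V φ)).restrictScalars ℝ)
  have hℓ : ∀ S : V →L[ℂ] V, ℓ S = (⟪S φ, φ⟫_ℂ).re := fun S => inner_re_symm (𝕜 := ℂ) φ (S φ)
  have hconj : ∀ s, (⟪T (ψ s), ψ s⟫_ℂ).re = ℓ (W s * T * star (W s)) := by
    intro s
    rw [hℓ, mul_apply_eq_comp, mul_apply_eq_comp, ← ContinuousLinearMap.adjoint_inner_right (W s)]
    rfl
  have hint : Continuous fun s => W s * T * star (W s) :=
    (hW.mul continuous_const).mul (continuous_star.comp hW)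
  calc 0 < ∫ s in a..b, (⟪T (ψ s), ψ s⟫_ℂ).re :=
        intervalIntegral.intervalIntegral_pos_of_pos
          ((Complex.continuous_re.comp ((T.continuous.comp hψ).inner hψ)).intervalIntegrable a b)
          (fun s => hT _ (hψ_ne s)) hab
    _ = ℓ (∫ s in a..b, W s * T * star (W s)) := by
        rw [intervalIntegral.integral_congr fun s _ => hconj s,
          ContinuousLinearMap.intervalIntegral_comp_comm ℓ (hint.intervalIntegrable a b)]
    _ = _ := hℓ _

theorem monotone_of_exp_of_positive_derivative_general
    {V : Type*} [NormedAddCommGroup V] [InnerProductSpace ℂ V] [FiniteDimensional ℂ V]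
    (A A' : ℝ → (V →L[ℂ] V))
    (hsa : ∀ x, IsSelfAdjoint (A x))
    (hA' : ∀ x, HasDerivAt A (A' x) x)
    (hpos : ∀ x, ∀ φ : V, φ ≠ 0 → 0 < (⟪A' x φ, φ⟫_ℂ).re)
    (U : ℝ → (V →L[ℂ] V))
    (hU : ∀ x, U x = NormedSpace.exp (Complex.I • A x))
    (D : ℝ → (V →L[ℂ] V))
    (hD : ∀ x, D x = Complex.I⁻¹ • (deriv U x ∘L star (U x))) :
    ∀ x, ∀ φ : V, φ ≠ 0 → 0 < (⟪D x φ, φ⟫_ℂ).re := by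
  intro x φ hφ
  set K : V →L[ℂ] V := Complex.I • A x
  have hK : K ∈ skewAdjoint (V →L[ℂ] V) :=
    Complex.I_smul_mem_skewAdjoint_iff_isSelfAdjoint.2 (hsa x)
  have hAc : Continuous A := continuous_iff_continuousAt.2 fun y => (hA' y).continuousAt
  have hU' := hasDerivAt_exp_comp (B := fun y => Complex.I • A y) ((hA' x).const_smul Complex.I)
    (hAc.const_smul Complex.I)
  rw [← funext hU] at hU'
  have hDx : D x = ∫ s in (0 : ℝ)..1, exp (s • K) * A' x * star (exp (s • K)) := by
    rw [hD, hU'.deriv, hU, star_exp, skewAdjoint.mem_iff.1 hK, ← ContinuousLinearMap.mul_def,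
      integral_exp_smul_mul_mul_exp_one_sub_smul_mul_exp_neg, ← intervalIntegral.integral_smul]
    congr 1 with s
    rw [star_exp_smul_of_mem_skewAdjoint hK, mul_smul_comm, smul_mul_assoc,
      inv_smul_smul₀ Complex.I_ne_zero]
  rw [hDx]
  exact re_inner_integral_mul_mul_star_pos (continuous_exp_smul K) (fun s => isUnit_exp_real _)
    (hpos x) zero_lt_one hφ

/-- **Corollary.** If `A(x)` is a `C¹` family of self-adjoint operators with `A'(x)`
positive definite for all `x`, then the unitary family `U(x) = e^{iA(x)}` is monotone,
i.e. `D(x) = (1/i)U'(x)U(x)⁻¹` is positive definite for every `x`. -/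
theorem monotone_of_exp_of_positive_derivative
    {V : Type*} [NormedAddCommGroup V] [InnerProductSpace ℂ V] [FiniteDimensional ℂ V]
    (A A' : ℝ → (V →L[ℂ] V))
    (hsa : ∀ x, IsSelfAdjoint (A x))
    (hA' : ∀ x, HasDerivAt A (A' x) x)
    (hA'cont : Continuous A')
    (hpos : ∀ x, ∀ φ : V, φ ≠ 0 → 0 < (⟪A' x φ, φ⟫_ℂ).re)
    (U : ℝ → (V →L[ℂ] V))
    (hU : ∀ x, U x = NormedSpace.exp (Complex.I • A x))
    (D : ℝ → (V →L[ℂ] V))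
    (hD : ∀ x, D x = Complex.I⁻¹ • (deriv U x ∘L star (U x))) :
    ∀ x, ∀ φ : V, φ ≠ 0 → 0 < (⟪D x φ, φ⟫_ℂ).re :=
  monotone_of_exp_of_positive_derivative_general A A' hsa hA' hpos U hU D hD
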